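/- arXiv:1801.07918 — 4 statements merged into one kernel-verified Lean document; each statement's English description precedes it below -/
import Mathlib

section
/- For n ≥ 3 and 1 ≤ i < j ≤ n, the exterior square of the elementary transvection t_{i,j}(ξ) = e + ξ e_{i,j} equals the product ∏_{k=1}^{i-1} t_{{k,i},{k,j}}(ξ) · ∏_{l=i+1}^{j-1} t_{{i,l},{l,j}}(-ξ) · ∏_{m=j+1}^{n} t_{{i,m},{j,m}}(ξ) of elementary transvections in GL_{binom(n,2)}(R), where rows and columns are indexed by 2-element subsets of {1,…,n}. -/
open Matrix

abbrev Idx (n m : ℕ) := {s : Finset (Fin n) // s.card = m}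

def extPow {R : Type*} [CommRing R] (n m : ℕ) (x : Matrix (Fin n) (Fin n) R) :
    Matrix (Idx n m) (Idx n m) R :=
  fun I J => (x.submatrix (⇑(I.1.orderEmbOfFin I.2)) (⇑(J.1.orderEmbOfFin J.2))).det

/-- The 2-element subset `{a, b}` for `a ≠ b`. -/
def pairIdx {n : ℕ} {a b : Fin n} (h : a ≠ b) : Idx n 2 := ⟨{a, b}, Finset.card_pair h⟩

variable {R : Type*} [CommRing R]

/-- The factor `t_{{k,i},{k,j}}(ξ)` for `k < i`. -/
def f₁ {n : ℕ} (i j : Fin n) (hij : i < j) (ξ : R) :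
    {k // k ∈ Finset.Iio i} → Matrix (Idx n 2) (Idx n 2) R :=
  fun k => Matrix.transvection
    (pairIdx (ne_of_lt (Finset.mem_Iio.mp k.2)))
    (pairIdx (ne_of_lt ((Finset.mem_Iio.mp k.2).trans hij))) ξ

/-- The factor `t_{{i,l},{l,j}}(-ξ)` for `i < l < j`. -/
def f₂ {n : ℕ} (i j : Fin n) (hij : i < j) (ξ : R) :
    {l // l ∈ Finset.Ioo i j} → Matrix (Idx n 2) (Idx n 2) R :=
  fun l => Matrix.transvection
    (pairIdx (ne_of_lt (Finset.mem_Ioo.mp l.2).1))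
    (pairIdx (ne_of_lt (Finset.mem_Ioo.mp l.2).2)) (-ξ)

/-- The factor `t_{{i,m},{j,m}}(ξ)` for `j < m`. -/
def f₃ {n : ℕ} (i j : Fin n) (hij : i < j) (ξ : R) :
    {k // k ∈ Finset.Ioi j} → Matrix (Idx n 2) (Idx n 2) R :=
  fun k => Matrix.transvection
    (pairIdx (ne_of_gt (hij.trans (Finset.mem_Ioi.mp k.2))))
    (pairIdx (ne_of_gt (Finset.mem_Ioi.mp k.2))) ξ

/-!
Every factor on the right is `1 + E` with `E` an elementary matrix `e_{P,Q}` such that `j ∉ P`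
and `j ∈ Q`. Any two such matrices multiply to zero, so the factors commute and the whole
product collapses to `1 + ∑ E`. It remains to compare entries: for `I = {a < b}` and
`J = {c < d}`, the `2 × 2` minor of `t_{i,j}(ξ)` is `δ_{I,J}`, plus `±ξ` exactly when `J` arises
from `I` by replacing `i` with `j`; the sign is `-1` when the common element lies between `i`
and `j`, as it then changes position in the sorted pair.
-/

section SquareZero

variable {M : Type*} [Ring M] {S : AddSubmonoid M}

theorem commute_of_sub_one_mem (hS : ∀ x ∈ S, ∀ y ∈ S, x * y = 0) {x y : M} (hx : x - 1 ∈ S)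
    (hy : y - 1 ∈ S) : Commute x y := by
  have h : Commute (x - 1) (y - 1) := (hS _ hx _ hy).trans (hS _ hy _ hx).symm
  simpa using (h.add_right (Commute.one_right _)).add_left (Commute.one_left _)

theorem pairwise_commute_of_sub_one_mem (hS : ∀ x ∈ S, ∀ y ∈ S, x * y = 0) {α : Type*}
    {s : Set α} {f : α → M} (hf : ∀ p ∈ s, f p - 1 ∈ S) : s.Pairwise (Function.onFun Commute f) :=
  fun p hp q hq _ => commute_of_sub_one_mem hS (hf p hp) (hf q hq)

theorem one_add_mul_one_add_of_mem (hS : ∀ x ∈ S, ∀ y ∈ S, x * y = 0) {a b : M} (ha : a ∈ S)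
    (hb : b ∈ S) : (1 + a) * (1 + b) = 1 + (a + b) := by
  simp only [add_mul, mul_add, one_mul, mul_one, hS a ha b hb, add_zero]
  abel

theorem Finset.noncommProd_eq_one_add_sum_sub_one (hS : ∀ x ∈ S, ∀ y ∈ S, x * y = 0)
    {α : Type*} (s : Finset α) (f : α → M) (hf : ∀ p ∈ s, f p - 1 ∈ S)
    (hc : (s : Set α).Pairwise (Function.onFun Commute f)) :
    s.noncommProd f hc = 1 + ∑ p ∈ s, (f p - 1) := by
  classical
  induction s using Finset.induction_on with
  | empty => simp
  | insert p s hp ih =>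
    have hf' : ∀ q ∈ s, f q - 1 ∈ S := fun q hq => hf q (Finset.mem_insert_of_mem hq)
    rw [Finset.noncommProd_insert_of_notMem _ _ _ _ hp, ih hf', Finset.sum_insert hp,
      ← one_add_mul_one_add_of_mem hS (hf p (Finset.mem_insert_self p s)) (sum_mem hf'),
      add_sub_cancel]

end SquareZero

namespace Matrix

variable {ι α : Type*}

def supportedIn [AddMonoid α] (rows cols : Set ι) : AddSubmonoid (Matrix ι ι α) where
  carrier := {M | ∀ a b, M a b ≠ 0 → a ∈ rows ∧ b ∈ cols}
  zero_mem' := by simp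
  add_mem' {M N} hM hN a b hMN := by
    by_cases h : M a b = 0
    · exact hN a b (by simpa [h] using hMN)
    · exact hM a b h

theorem single_mem_supportedIn [DecidableEq ι] [AddMonoid α] {rows cols : Set ι} {a b : ι}
    (ha : a ∈ rows) (hb : b ∈ cols) (x : α) : single a b x ∈ supportedIn rows cols := by
  intro a' b' h
  obtain ⟨rfl, rfl⟩ : a = a' ∧ b = b' := by_contra fun hne => h (single_apply_of_ne _ _ _ _ _ hne)
  exact ⟨ha, hb⟩

theorem mul_eq_zero_of_mem_supportedIn [Fintype ι] [NonUnitalNonAssocSemiring α]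
    {rows cols rows' cols' : Set ι} {M N : Matrix ι ι α} (hM : M ∈ supportedIn rows cols)
    (hN : N ∈ supportedIn rows' cols') (h : Disjoint cols rows') : M * N = 0 := by
  ext a c
  refine Finset.sum_eq_zero fun b _ => ?_
  by_contra hne
  exact h.notMem_of_mem_left (hM a b (left_ne_zero_of_mul hne)).2
    (hN b c (right_ne_zero_of_mul hne)).1

theorem transvection_sub_one [DecidableEq ι] [CommRing α] (a b : ι) (x : α) :
    transvection a b x - 1 = single a b x :=
  add_sub_cancel_left 1 _

end Matrix

theorem Finset.sum_attach_eq_ite {α M : Type*} [DecidableEq α] [AddCommMonoid M] {s : Finset α}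
    (g : s → M) (a : α) (Q : Prop) [Decidable Q] (x : M)
    (hg : ∀ p : s, g p = if p.1 = a ∧ Q then x else 0) :
    ∑ p ∈ s.attach, g p = if a ∈ s ∧ Q then x else 0 := by
  rw [Finset.sum_congr rfl fun p _ => hg p,
    Finset.sum_attach s (fun p => if p = a ∧ Q then x else 0)]
  simp [ite_and, Finset.sum_ite_eq']

theorem Finset.orderEmbOfFin_pair {α : Type*} [LinearOrder α] {a b : α} (hab : a < b)
    (k : Fin 2) : ({a, b} : Finset α).orderEmbOfFin (Finset.card_pair hab.ne) k = ![a, b] k := by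
  rw [Finset.orderEmbOfFin_unique (Finset.card_pair hab.ne) (f := ![a, b])]
  · intro m; fin_cases m <;> simp
  · intro m m' hm; fin_cases m <;> fin_cases m' <;> simp_all

section PairIdx

variable {n : ℕ}

theorem pairIdx_eq_pairIdx_iff {a b c d : Fin n} (hab : a ≠ b) (hcd : c ≠ d) :
    pairIdx hab = pairIdx hcd ↔ a = c ∧ b = d ∨ a = d ∧ b = c := by
  rw [pairIdx, pairIdx, Subtype.mk.injEq, ← Finset.coe_inj]
  push_cast
  exact Set.pair_eq_pair_iff

theorem exists_pairIdx (I : Idx n 2) : ∃ a b, ∃ h : a < b, I = pairIdx h.ne := by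
  obtain ⟨a, b, hab, hI⟩ := Finset.card_eq_two.mp I.2
  rcases hab.lt_or_gt with h | h
  · exact ⟨a, b, h, Subtype.ext hI⟩
  · exact ⟨b, a, h, Subtype.ext (hI.trans (Finset.pair_comm a b))⟩

theorem extPow_two_apply_pairIdx (x : Matrix (Fin n) (Fin n) R) {a b c d : Fin n}
    (hab : a < b) (hcd : c < d) :
    extPow n 2 x (pairIdx hab.ne) (pairIdx hcd.ne) = x a c * x b d - x a d * x b c := by
  simp [extPow, pairIdx, Finset.orderEmbOfFin_pair hab, Finset.orderEmbOfFin_pair hcd,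
    det_fin_two]

theorem extPow_two_transvection_apply {i j a b c d : Fin n} (hij : i < j) (ξ : R)
    (hab : a < b) (hcd : c < d) :
    extPow n 2 (transvection i j ξ) (pairIdx hab.ne) (pairIdx hcd.ne) =
      (1 : Matrix (Idx n 2) (Idx n 2) R) (pairIdx hab.ne) (pairIdx hcd.ne) +
        ((if a = c ∧ b = i ∧ d = j then ξ else 0) + (if b = c ∧ a = i ∧ d = j then -ξ else 0) +
          (if b = d ∧ a = i ∧ c = j then ξ else 0)) := by
  rw [extPow_two_apply_pairIdx _ hab hcd]
  simp only [transvection, Matrix.add_apply, one_apply, single_apply, pairIdx_eq_pairIdx_iff]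
  grind (splits := 40)

end PairIdx

section Factors

variable {n : ℕ} {i j : Fin n} (hij : i < j) (ξ : R)

abbrev removingIndex (j : Fin n) : AddSubmonoid (Matrix (Idx n 2) (Idx n 2) R) :=
  supportedIn {P | j ∉ P.1} {Q | j ∈ Q.1}

theorem removingIndex_mul_eq_zero :
    ∀ M ∈ removingIndex (R := R) j, ∀ N ∈ removingIndex j, M * N = 0 :=
  fun _ hM _ hN => mul_eq_zero_of_mem_supportedIn hM hN (Set.disjoint_left.mpr fun _ h h' => h' h)

theorem f₁_sub_one_mem (k : {k // k ∈ Finset.Iio i}) : f₁ i j hij ξ k - 1 ∈ removingIndex j := by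
  have := Finset.mem_Iio.mp k.2
  simp only [f₁, transvection_sub_one]
  exact single_mem_supportedIn (by simp [pairIdx]; grind) (by simp [pairIdx]) ξ

theorem f₂_sub_one_mem (l : {l // l ∈ Finset.Ioo i j}) : f₂ i j hij ξ l - 1 ∈ removingIndex j := by
  have := Finset.mem_Ioo.mp l.2
  simp only [f₂, transvection_sub_one]
  exact single_mem_supportedIn (by simp [pairIdx]; grind) (by simp [pairIdx]) (-ξ)

theorem f₃_sub_one_mem (m : {m // m ∈ Finset.Ioi j}) : f₃ i j hij ξ m - 1 ∈ removingIndex j := by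
  have := Finset.mem_Ioi.mp m.2
  simp only [f₃, transvection_sub_one]
  exact single_mem_supportedIn (by simp [pairIdx]; grind) (by simp [pairIdx]) ξ

variable {a b c d : Fin n} (hab : a < b) (hcd : c < d)

theorem sum_f₁_sub_one_apply :
    (∑ k ∈ (Finset.Iio i).attach, (f₁ i j hij ξ k - 1)) (pairIdx hab.ne) (pairIdx hcd.ne) =
      if a = c ∧ b = i ∧ d = j then ξ else 0 := by
  rw [Matrix.sum_apply, Finset.sum_attach_eq_ite _ a (b = i ∧ a = c ∧ d = j) ξ]
  · exact if_congr (by simp; grind) rfl rfl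
  · intro k
    have := Finset.mem_Iio.mp k.2
    simp only [f₁, transvection_sub_one, single_apply, pairIdx_eq_pairIdx_iff]
    exact if_congr (by grind) rfl rfl

theorem sum_f₂_sub_one_apply :
    (∑ l ∈ (Finset.Ioo i j).attach, (f₂ i j hij ξ l - 1)) (pairIdx hab.ne) (pairIdx hcd.ne) =
      if b = c ∧ a = i ∧ d = j then -ξ else 0 := by
  rw [Matrix.sum_apply, Finset.sum_attach_eq_ite _ b (a = i ∧ b = c ∧ d = j) (-ξ)]
  · exact if_congr (by simp; grind) rfl rfl
  · intro l
    have := Finset.mem_Ioo.mp l.2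
    simp only [f₂, transvection_sub_one, single_apply, pairIdx_eq_pairIdx_iff]
    exact if_congr (by grind) rfl rfl

theorem sum_f₃_sub_one_apply :
    (∑ m ∈ (Finset.Ioi j).attach, (f₃ i j hij ξ m - 1)) (pairIdx hab.ne) (pairIdx hcd.ne) =
      if b = d ∧ a = i ∧ c = j then ξ else 0 := by
  rw [Matrix.sum_apply, Finset.sum_attach_eq_ite _ b (a = i ∧ c = j ∧ b = d) ξ]
  · exact if_congr (by simp; grind) rfl rfl
  · intro m
    have := Finset.mem_Ioi.mp m.2
    simp only [f₃, transvection_sub_one, single_apply, pairIdx_eq_pairIdx_iff]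
    exact if_congr (by grind) rfl rfl

end Factors

theorem extPow_two_transvection_general {n : ℕ} (i j : Fin n) (hij : i < j) (ξ : R) :
    ∃ (h₁ : ((Finset.Iio i).attach : Set _).Pairwise (Function.onFun Commute (f₁ i j hij ξ)))
      (h₂ : ((Finset.Ioo i j).attach : Set _).Pairwise (Function.onFun Commute (f₂ i j hij ξ)))
      (h₃ : ((Finset.Ioi j).attach : Set _).Pairwise (Function.onFun Commute (f₃ i j hij ξ))),
      extPow n 2 (Matrix.transvection i j ξ) =
        (Finset.Iio i).attach.noncommProd (f₁ i j hij ξ) h₁ *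
        (Finset.Ioo i j).attach.noncommProd (f₂ i j hij ξ) h₂ *
        (Finset.Ioi j).attach.noncommProd (f₃ i j hij ξ) h₃ := by
  have hS := removingIndex_mul_eq_zero (R := R) (j := j)
  have h₁ : ∀ k ∈ (Finset.Iio i).attach, f₁ i j hij ξ k - 1 ∈ removingIndex j :=
    fun k _ => f₁_sub_one_mem hij ξ k
  have h₂ : ∀ l ∈ (Finset.Ioo i j).attach, f₂ i j hij ξ l - 1 ∈ removingIndex j :=
    fun l _ => f₂_sub_one_mem hij ξ l
  have h₃ : ∀ m ∈ (Finset.Ioi j).attach, f₃ i j hij ξ m - 1 ∈ removingIndex j :=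
    fun m _ => f₃_sub_one_mem hij ξ m
  refine ⟨pairwise_commute_of_sub_one_mem hS h₁, pairwise_commute_of_sub_one_mem hS h₂,
    pairwise_commute_of_sub_one_mem hS h₃, ?_⟩
  rw [Finset.noncommProd_eq_one_add_sum_sub_one hS _ _ h₁,
    Finset.noncommProd_eq_one_add_sum_sub_one hS _ _ h₂,
    Finset.noncommProd_eq_one_add_sum_sub_one hS _ _ h₃,
    one_add_mul_one_add_of_mem hS (sum_mem h₁) (sum_mem h₂),
    one_add_mul_one_add_of_mem hS (add_mem (sum_mem h₁) (sum_mem h₂)) (sum_mem h₃)]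
  ext I J
  obtain ⟨a, b, hab, rfl⟩ := exists_pairIdx I
  obtain ⟨c, d, hcd, rfl⟩ := exists_pairIdx J
  rw [extPow_two_transvection_apply hij ξ hab hcd, Matrix.add_apply, Matrix.add_apply,
    Matrix.add_apply,
    sum_f₁_sub_one_apply hij ξ hab hcd, sum_f₂_sub_one_apply hij ξ hab hcd,
    sum_f₃_sub_one_apply hij ξ hab hcd]

/-- Formula (1): the exterior square of an elementary transvection `t_{i,j}(ξ)` (for `i < j`)
is the product of elementary transvections
`∏_{k<i} t_{{k,i},{k,j}}(ξ) · ∏_{i<l<j} t_{{i,l},{l,j}}(-ξ) · ∏_{j<m} t_{{i,m},{j,m}}(ξ)`;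
the factors inside each product pairwise commute, so the products are well defined. -/
theorem extPow_two_transvection {n : ℕ} (hn : 3 ≤ n) (i j : Fin n) (hij : i < j) (ξ : R) :
    ∃ (h₁ : ((Finset.Iio i).attach : Set _).Pairwise (Function.onFun Commute (f₁ i j hij ξ)))
      (h₂ : ((Finset.Ioo i j).attach : Set _).Pairwise (Function.onFun Commute (f₂ i j hij ξ)))
      (h₃ : ((Finset.Ioi j).attach : Set _).Pairwise (Function.onFun Commute (f₃ i j hij ξ))),
      extPow n 2 (Matrix.transvection i j ξ) =
        (Finset.Iio i).attach.noncommProd (f₁ i j hij ξ) h₁ *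
        (Finset.Ioo i j).attach.noncommProd (f₂ i j hij ξ) h₂ *
        (Finset.Ioi j).attach.noncommProd (f₃ i j hij ξ) h₃ :=
  extPow_two_transvection_general i j hij ξ
end

section
/- For n ≥ 3, 1 ≤ i < j ≤ n, and any ξ ∈ R, the m-th exterior power of the elementary transvection t_{i,j}(ξ) equals the product over all (m−1)-element subsets L of {1,…,n}\{i,j} of the elementary transvections t_{L∪{i}, L∪{j}}(sign(L,i,j)·ξ) in GL_{binom(n,m)}(R), where sign(L,i,j) is the sign of the permutation arranging the sequence (L,i,j) into increasing order; in particular all these factors pairwise commute. -/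
open Matrix

/-- The sign of the permutation arranging the sequence `(L, i, j)` (with `L` listed in
increasing order) into increasing order: `i` has to jump over the elements of `L` greater
than `i`, and `j` over those greater than `j`. -/
def signLij (n : ℕ) (L : Finset (Fin n)) (i j : Fin n) : ℤ :=
  (-1) ^ ((L.filter (fun a => i < a)).card + (L.filter (fun a => j < a)).card)

/-- The `m`-element subset `L ∪ {a}` for `a ∉ L`, `|L| = m - 1`. -/
def insertIdx {n m : ℕ} (hm : 1 ≤ m) (a : Fin n) (L : Finset (Fin n)) (hL : L.card = m - 1)
    (ha : a ∉ L) : Idx n m :=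
  ⟨insert a L, by rw [Finset.card_insert_of_notMem ha, hL]; omega⟩

/-- The factor `t_{L∪{i}, L∪{j}}(sign(L,i,j)·ξ)` indexed by an `(m-1)`-element subset
`L ⊆ {1,…,n} \ {i,j}`. -/
def fGen {R : Type*} [CommRing R] {n m : ℕ} (hm : 1 ≤ m) (i j : Fin n) (ξ : R) :
    {L // L ∈ Finset.powersetCard (m - 1) ({i, j}ᶜ : Finset (Fin n))} →
      Matrix (Idx n m) (Idx n m) R :=
  fun L => Matrix.transvection
    (insertIdx hm i L.1 (Finset.mem_powersetCard.mp L.2).2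
      (fun hi => by simpa using (Finset.mem_powersetCard.mp L.2).1 hi))
    (insertIdx hm j L.1 (Finset.mem_powersetCard.mp L.2).2
      (fun hj => by simpa using (Finset.mem_powersetCard.mp L.2).1 hj))
    ((signLij n L.1 i j : R) * ξ)

/-!
Write `t_{i,j}(ξ) = 1 + ξ E_{i,j}`. In an `m × m` minor with rows `I` and columns `J`, the perturbation
touches at most the single entry `(i, j)`, so the minor is that of the identity plus `ξ` times the
`(i, j)` cofactor; the cofactor is `±` the minor of the identity on `I \ {i}`, `J \ {j}`, which
vanishes unless `I \ {i} = J \ {j} =: L`. Hence `∧^m t_{i,j}(ξ) = 1 + ∑_L N_L` with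
`N_L = sign(L,i,j) ξ E_{L∪{i}, L∪{j}}`. Since `j ∉ L' ∪ {i}`, every product `N_L N_{L'}` vanishes,
so the factors `1 + N_L` commute and their product is `1 + ∑_L N_L`.
-/

open Finset

theorem Finset.card_filter_lt_orderEmbOfFin {α : Type*} [LinearOrder α] (s : Finset α) {k : ℕ}
    (h : s.card = k) (a : Fin k) : #{x ∈ s | x < s.orderEmbOfFin h a} = a := by
  have : {x ∈ s | x < s.orderEmbOfFin h a} = (Iio a).map (s.orderEmbOfFin h).toEmbedding := by
    ext x
    simp only [mem_filter, mem_map, mem_Iio, RelEmbedding.coe_toEmbedding]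
    constructor
    · rintro ⟨hx, hlt⟩
      obtain ⟨b, rfl⟩ : x ∈ Set.range (s.orderEmbOfFin h) := by simpa using hx
      exact ⟨b, (s.orderEmbOfFin h).lt_iff_lt.mp hlt, rfl⟩
    · rintro ⟨b, hb, rfl⟩
      exact ⟨s.orderEmbOfFin_mem h b, (s.orderEmbOfFin h).lt_iff_lt.mpr hb⟩
  rw [this, card_map, Fin.card_Iio]

theorem Finset.orderEmbOfFin_comp_succAbove {α : Type*} [LinearOrder α] (s : Finset α) {k : ℕ}
    (h : s.card = k + 1) (a : Fin (k + 1)) :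
    ⇑(s.orderEmbOfFin h) ∘ a.succAbove =
      ⇑((s.erase (s.orderEmbOfFin h a)).orderEmbOfFin (by simp [h])) :=
  orderEmbOfFin_unique _
    (fun b => mem_erase.mpr ⟨(s.orderEmbOfFin h).injective.ne (a.succAbove_ne b), by simp⟩)
    ((s.orderEmbOfFin h).strictMono.comp a.strictMono_succAbove)

theorem neg_one_pow_add_eq_of_add_eq {R : Type*} [Monoid R] [HasDistribNeg R] {p p' q q' c : ℕ}
    (hp : p + p' = c) (hq : q + q' = c) : (-1 : R) ^ (p + q) = (-1) ^ (p' + q') :=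
  neg_one_pow_congr (by simp only [Nat.even_iff]; omega)

theorem Finset.card_filter_lt_add_card_filter_gt {α : Type*} [LinearOrder α] {s : Finset α} {i : α}
    (hi : i ∉ s) : #{x ∈ s | x < i} + #{x ∈ s | i < x} = #s := by
  rw [← card_filter_add_card_filter_not (s := s) (p := fun x => x < i)]
  refine congrArg (#{x ∈ s | x < i} + #·) (filter_congr fun x hx => ?_)
  rw [not_lt, lt_iff_le_and_ne]
  exact and_iff_left (ne_of_mem_of_not_mem hx hi).symm

theorem Finset.insert_eq_and_insert_eq_iff {α : Type*} [DecidableEq α] {i j : α}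
    {L I J : Finset α} (hi : i ∉ L) (hj : j ∉ L) :
    insert i L = I ∧ insert j L = J ↔ (i ∈ I ∧ j ∈ J ∧ I.erase i = J.erase j) ∧ L = I.erase i := by
  constructor
  · rintro ⟨rfl, rfl⟩
    simp [erase_insert hi, erase_insert hj]
  · rintro ⟨⟨hiI, hjJ, he⟩, rfl⟩
    exact ⟨insert_erase hiI, by rw [he, insert_erase hjJ]⟩

theorem commute_of_sub_one_mul_sub_one_eq_zero {M : Type*} [Ring M] {x y : M}
    (hxy : (x - 1) * (y - 1) = 0) (hyx : (y - 1) * (x - 1) = 0) : Commute x y := by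
  have expand : ∀ a b : M, a * b = 1 + (a - 1) + (b - 1) + (a - 1) * (b - 1) := by
    intro a b
    noncomm_ring
  rw [Commute, SemiconjBy, expand x y, expand y x, hxy, hyx]
  abel

theorem Finset.noncommProd_eq_one_add_sum_sub_one_s3 {M α : Type*} [Ring M] (s : Finset α)
    (f : α → M) (h : ∀ a ∈ s, ∀ b ∈ s, (f a - 1) * (f b - 1) = 0) (hc) :
    s.noncommProd f hc = 1 + ∑ a ∈ s, (f a - 1) := by
  induction s using Finset.cons_induction with
  | empty => simp
  | cons a s _ ih =>
    have hs : ∀ b ∈ s, ∀ c ∈ s, (f b - 1) * (f c - 1) = 0 := fun b hb c hc' =>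
      h b (mem_cons_of_mem hb) c (mem_cons_of_mem hc')
    have hzero : (f a - 1) * ∑ b ∈ s, (f b - 1) = 0 := by
      rw [mul_sum]
      exact sum_eq_zero fun b hb => h a (mem_cons_self a s) b (mem_cons_of_mem hb)
    rw [noncommProd_cons, ih hs, sum_cons]
    calc f a * (1 + ∑ b ∈ s, (f b - 1))
        = 1 + ((f a - 1) + ∑ b ∈ s, (f b - 1)) + (f a - 1) * ∑ b ∈ s, (f b - 1) := by noncomm_ring
      _ = 1 + ((f a - 1) + ∑ b ∈ s, (f b - 1)) := by rw [hzero, add_zero]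

namespace Matrix

variable {R : Type*} [CommRing R]

theorem det_add_single {ι : Type*} [Fintype ι] [DecidableEq ι] (A : Matrix ι ι R) (a b : ι)
    (c : R) : (A + single a b c).det = A.det + c * A.adjugate b a := by
  have : A + single a b c = A.updateRow a (A a + c • Pi.single b 1) := by
    ext x y
    rcases eq_or_ne x a with rfl | hx
    · simp [single_apply, Pi.single_apply, eq_comm]
    · simp [hx.symm, updateRow_ne hx]
  rw [this, det_updateRow_add, updateRow_eq_self, det_updateRow_smul, adjugate_apply]

theorem submatrix_single_of_injective {l m o p : Type*} [DecidableEq l] [DecidableEq m]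
    [DecidableEq o] [DecidableEq p] {f : l → m} {g : o → p} (hf : f.Injective) (hg : g.Injective)
    (a : l) (b : o) (c : R) : (single (f a) (g b) c).submatrix f g = single a b c := by
  ext x y
  simp [single_apply, hf.eq_iff, hg.eq_iff]

theorem submatrix_single_eq_zero {l m o p : Type*} [DecidableEq m] [DecidableEq p]
    {f : l → m} {g : o → p} {i : m} {j : p} (h : i ∉ Set.range f ∨ j ∉ Set.range g) (c : R) :
    (single i j c).submatrix f g = 0 := by
  ext x y
  rw [submatrix_apply, single_apply, if_neg, zero_apply]
  rintro ⟨rfl, rfl⟩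
  simp at h

end Matrix

theorem signLij_eq_neg_one_pow {n : ℕ} {L : Finset (Fin n)} {i j : Fin n} (hi : i ∉ L)
    (hj : j ∉ L) : signLij n L i j = (-1) ^ (#{x ∈ L | x < i} + #{x ∈ L | x < j}) :=
  neg_one_pow_add_eq_of_add_eq ((add_comm _ _).trans (card_filter_lt_add_card_filter_gt hi))
    ((add_comm _ _).trans (card_filter_lt_add_card_filter_gt hj))

section ExtPow

open Matrix

variable {R : Type*} [CommRing R] {n : ℕ}

theorem extPow_one (k : ℕ) : extPow n k (1 : Matrix (Fin n) (Fin n) R) = 1 := by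
  ext I J
  rw [extPow, one_apply]
  split_ifs with hIJ
  · subst hIJ
    rw [submatrix_one _ (I.1.orderEmbOfFin I.2).injective, det_one]
  · obtain ⟨x, hxI, hxJ⟩ : ∃ x ∈ I.1, x ∉ J.1 := not_subset.mp fun hsub =>
      hIJ (Subtype.ext (eq_of_subset_of_card_le hsub (by rw [I.2, J.2])))
    obtain ⟨a, rfl⟩ : x ∈ Set.range (I.1.orderEmbOfFin I.2) := by simpa using hxI
    refine det_eq_zero_of_row_eq_zero a fun b => ?_
    rw [submatrix_apply, one_apply_ne]
    exact fun h => hxJ (h ▸ J.1.orderEmbOfFin_mem J.2 b)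

theorem extPow_transvection_apply_of_not_mem {i j : Fin n} (ξ : R) {k : ℕ} {I J : Idx n k}
    (h : ¬(i ∈ I.1 ∧ j ∈ J.1)) :
    extPow n k (transvection i j ξ) I J = (1 : Matrix (Idx n k) (Idx n k) R) I J := by
  rw [← extPow_one k, extPow, extPow, transvection, submatrix_add, Pi.add_apply, Pi.add_apply,
    submatrix_single_eq_zero (by simpa using not_and_or.mp h), add_zero]

theorem extPow_transvection_apply_of_mem {i j : Fin n} (ξ : R) {k : ℕ} {I J : Idx n (k + 1)}
    (hi : i ∈ I.1) (hj : j ∈ J.1) :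
    extPow n (k + 1) (transvection i j ξ) I J = (1 : Matrix (Idx n (k + 1)) _ R) I J +
      ξ * (-1) ^ (#{x ∈ I.1 | x < i} + #{x ∈ J.1 | x < j}) *
        (1 : Matrix (Idx n k) (Idx n k) R) ⟨I.1.erase i, by simp [hi, I.2]⟩
          ⟨J.1.erase j, by simp [hj, J.2]⟩ := by
  obtain ⟨a, rfl⟩ : i ∈ Set.range (I.1.orderEmbOfFin I.2) := by simpa using hi
  obtain ⟨b, rfl⟩ : j ∈ Set.range (J.1.orderEmbOfFin J.2) := by simpa using hj
  rw [← extPow_one k, ← extPow_one (k + 1), extPow, extPow, extPow, transvection, submatrix_add,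
    Pi.add_apply, Pi.add_apply,
    submatrix_single_of_injective (RelEmbedding.injective _) (RelEmbedding.injective _),
    det_add_single, adjugate_fin_succ_eq_det_submatrix, submatrix_submatrix,
    orderEmbOfFin_comp_succAbove, orderEmbOfFin_comp_succAbove, card_filter_lt_orderEmbOfFin,
    card_filter_lt_orderEmbOfFin]
  ring

theorem extPow_transvection_apply (i j : Fin n) (ξ : R) {k : ℕ} (I J : Idx n (k + 1)) :
    extPow n (k + 1) (transvection i j ξ) I J = (1 : Matrix (Idx n (k + 1)) _ R) I J +
      if i ∈ I.1 ∧ j ∈ J.1 ∧ I.1.erase i = J.1.erase j then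
        (signLij n (I.1.erase i) i j : R) * ξ else 0 := by
  by_cases hmem : i ∈ I.1 ∧ j ∈ J.1
  swap
  · rw [extPow_transvection_apply_of_not_mem ξ hmem, if_neg fun h => hmem ⟨h.1, h.2.1⟩, add_zero]
  obtain ⟨hi, hj⟩ := hmem
  rw [extPow_transvection_apply_of_mem ξ hi hj]
  congr 1
  rw [one_apply]
  simp only [Subtype.mk.injEq, hi, hj, true_and]
  split_ifs with he
  · have hI : #{x ∈ I.1 | x < i} = #{x ∈ I.1.erase i | x < i} := by
      rw [filter_erase, erase_eq_of_notMem (by simp)]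
    have hJ : #{x ∈ J.1 | x < j} = #{x ∈ I.1.erase i | x < j} := by
      rw [he, filter_erase, erase_eq_of_notMem (by simp)]
    rw [signLij_eq_neg_one_pow (notMem_erase i _) (he ▸ notMem_erase j _), hI, hJ]
    push_cast
    ring
  · rw [mul_zero]

end ExtPow

section Factors

open Matrix

variable {R : Type*} [CommRing R] {n m : ℕ} (hm : 1 ≤ m) {i j : Fin n} (ξ : R)

theorem fGen_sub_one_apply (L : {L // L ∈ powersetCard (m - 1) ({i, j}ᶜ : Finset (Fin n))})
    (I J : Idx n m) :
    (fGen hm i j ξ L - 1) I J =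
      if insert i L.1 = I.1 ∧ insert j L.1 = J.1 then (signLij n L.1 i j : R) * ξ else 0 := by
  simp [fGen, transvection, single_apply, insertIdx, Subtype.ext_iff]

theorem fGen_sub_one_mul_fGen_sub_one (hij : i ≠ j)
    (L L' : {L // L ∈ powersetCard (m - 1) ({i, j}ᶜ : Finset (Fin n))}) :
    (fGen hm i j ξ L - 1) * (fGen hm i j ξ L' - 1) = 0 := by
  simp only [fGen, transvection, add_sub_cancel_left]
  apply single_mul_single_of_ne
  intro h
  have hinsert : insert j L.1 = insert i L'.1 := congrArg Subtype.val h
  have hj : j ∈ insert i L'.1 := hinsert ▸ mem_insert_self j L.1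
  rcases mem_insert.mp hj with hji | hjL'
  · exact hij hji.symm
  · simpa using (mem_powersetCard.mp L'.2).1 hjL'

theorem sum_fGen_sub_one_apply (I J : Idx n m) :
    (∑ L ∈ (powersetCard (m - 1) ({i, j}ᶜ : Finset (Fin n))).attach, (fGen hm i j ξ L - 1)) I J =
      if i ∈ I.1 ∧ j ∈ J.1 ∧ I.1.erase i = J.1.erase j then
        (signLij n (I.1.erase i) i j : R) * ξ else 0 := by
  have hnot : ∀ L ∈ powersetCard (m - 1) ({i, j}ᶜ : Finset (Fin n)), i ∉ L ∧ j ∉ L :=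
    fun L hL => have hsub := (mem_powersetCard.mp hL).1
      ⟨fun hiL => by simpa using hsub hiL, fun hjL => by simpa using hsub hjL⟩
  rw [Matrix.sum_apply]
  simp_rw [fGen_sub_one_apply]
  rw [sum_attach _ fun L =>
    if insert i L = I.1 ∧ insert j L = J.1 then (signLij n L i j : R) * ξ else 0]
  rw [sum_congr rfl fun L hL =>
    if_congr (insert_eq_and_insert_eq_iff (hnot L hL).1 (hnot L hL).2) rfl rfl]
  split_ifs with h
  · obtain ⟨hi, hj, he⟩ := h
    have hmem : J.1.erase j ∈ powersetCard (m - 1) ({i, j}ᶜ : Finset (Fin n)) := by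
      refine mem_powersetCard.mpr ⟨fun x hx => ?_, by rw [card_erase_of_mem hj, J.2]⟩
      simp [ne_of_mem_erase (he ▸ hx : x ∈ I.1.erase i), ne_of_mem_erase hx]
    simp only [hi, hj, he, true_and, sum_ite_eq', if_pos hmem]
  · simp [h]

end Factors

theorem extPow_m_transvection_general {R : Type*} [CommRing R] {n m : ℕ} (hm : 1 ≤ m)
    (i j : Fin n) (hij : i < j) (ξ : R) :
    ∃ hc : (((Finset.powersetCard (m - 1) ({i, j}ᶜ : Finset (Fin n))).attach : Finset _) :
        Set _).Pairwise (Function.onFun Commute (fGen hm i j ξ)),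
      extPow n m (Matrix.transvection i j ξ) =
        (Finset.powersetCard (m - 1) ({i, j}ᶜ : Finset (Fin n))).attach.noncommProd
          (fGen hm i j ξ) hc := by
  have hfactors := fGen_sub_one_mul_fGen_sub_one hm ξ hij.ne
  have hc : (((powersetCard (m - 1) ({i, j}ᶜ : Finset (Fin n))).attach : Finset _) :
      Set _).Pairwise (Function.onFun Commute (fGen hm i j ξ)) := fun L _ L' _ _ =>
    commute_of_sub_one_mul_sub_one_eq_zero (hfactors L L') (hfactors L' L)
  refine ⟨hc, ?_⟩
  obtain ⟨k, rfl⟩ : ∃ k, m = k + 1 := ⟨m - 1, by omega⟩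
  ext I J
  rw [noncommProd_eq_one_add_sum_sub_one_s3 _ _ (fun L _ L' _ => hfactors L L'), Matrix.add_apply,
    sum_fGen_sub_one_apply, extPow_transvection_apply]

/-- Formula (m): the `m`-th exterior power of `t_{i,j}(ξ)` equals the product, over all
`(m-1)`-element subsets `L` of `{1,…,n} \ {i,j}`, of the elementary transvections
`t_{L∪{i}, L∪{j}}(sign(L,i,j)·ξ)`; in particular all the factors pairwise commute. -/
theorem extPow_m_transvection {R : Type*} [CommRing R] {n m : ℕ} (hn : m + 2 ≤ n) (hm : 1 ≤ m)
    (i j : Fin n) (hij : i < j) (ξ : R) :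
    ∃ hc : (((Finset.powersetCard (m - 1) ({i, j}ᶜ : Finset (Fin n))).attach : Finset _) :
        Set _).Pairwise (Function.onFun Commute (fGen hm i j ξ)),
      extPow n m (Matrix.transvection i j ξ) =
        (Finset.powersetCard (m - 1) ({i, j}ᶜ : Finset (Fin n))).attach.noncommProd
          (fGen hm i j ξ) hc :=
  extPow_m_transvection_general hm i j hij ξ
end

section
/- Let I, J be distinct m-element subsets of {1,…,n} and i, j ∈ {1,…,n} with i ≠ j. Suppose i ∈ I, j ∉ I, i ∉ J, j ∉ J. Then the commutator [t_{I,J}(ξ), ∧^m t_{j,i}(ζ)] equals t_{Ĩ,J}(±ζξ) where Ĩ = (I\{i}) ∪ {j}, for some sign depending only on I, i, j. -/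
open Matrix

/-! `∧^m t_{j,i}(ζ) = 1 + ζ N`, where `N_{K,L}` is the `(K, L)` minor of the identity with
row `j` replaced by row `i`; it vanishes unless `j ∈ K` and `L = (K \ {j}) ∪ {i}`, and is then a
permutation sign. With `E = e_{I,J}` we get `E N = 0` (as `j ∉ J`), `N² = 0` and `E² = 0`, so
the commutator `(1 + ξE)(1 + ζN)(1 - ξE)(1 - ζN)` collapses to
`1 - ζξ N E = 1 - ζξ N_{Ĩ,I} e_{Ĩ,J}`. -/

theorem Finset.image_update_id {α : Type*} [DecidableEq α] {s : Finset α} {j : α} (i : α)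
    (hj : j ∈ s) : s.image (Function.update id j i) = insert i (s.erase j) := by
  ext c
  simp only [Finset.mem_image, Finset.mem_insert, Finset.mem_erase, Function.update_apply, id]
  constructor
  · rintro ⟨a, ha, rfl⟩
    split_ifs with h <;> simp_all
  · rintro (rfl | ⟨hcj, hc⟩)
    · exact ⟨j, hj, by simp⟩
    · exact ⟨c, hc, by simp [hcj]⟩

theorem Finset.eq_insert_erase_of_insert_erase_eq {α : Type*} [DecidableEq α] {s t : Finset α}
    {i j : α} (hj : j ∈ s) (hcard : s.card = t.card) (h : insert i (s.erase j) = t) :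
    s = insert j (t.erase i) := by
  have hi : i ∉ s.erase j := fun hi => by
    have := congrArg Finset.card h
    rw [Finset.insert_eq_of_mem hi, Finset.card_erase_of_mem hj] at this
    have := Finset.card_pos.mpr ⟨j, hj⟩
    omega
  rw [← h, Finset.erase_insert hi, Finset.insert_erase hj]

def extPowTransvectionDeriv (R : Type*) [CommRing R] {n m : ℕ} (i j : Fin n) :
    Matrix (Idx n m) (Idx n m) R :=
  fun K L =>
    if j ∈ K.1 then
      ((1 : Matrix (Fin n) (Fin n) R).submatrix (Function.update id j i ∘ K.1.orderEmbOfFin K.2)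
        (L.1.orderEmbOfFin L.2)).det
    else 0

section

variable {R : Type*} [CommRing R] {n m : ℕ}

theorem det_one_submatrix_orderEmbOfFin_eq_zero {f : Fin m → Fin n} {L : Idx n m}
    (h : Finset.univ.image f ≠ L.1) :
    ((1 : Matrix (Fin n) (Fin n) R).submatrix f (L.1.orderEmbOfFin L.2)).det = 0 := by
  obtain ⟨c, hcL, hcf⟩ : ∃ c ∈ L.1, c ∉ Finset.univ.image f := by
    by_contra! hsub
    refine h (Finset.eq_of_subset_of_card_le hsub ?_).symm
    rw [L.2]
    exact Finset.card_image_le.trans (by simp)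
  obtain ⟨b, rfl⟩ : c ∈ Set.range (L.1.orderEmbOfFin L.2) := by
    rwa [Finset.range_orderEmbOfFin]
  refine det_eq_zero_of_column_eq_zero b fun a => ?_
  have : f a ≠ L.1.orderEmbOfFin L.2 b := fun h => hcf (h ▸ Finset.mem_image_of_mem f (by simp))
  simp [one_apply, this]

theorem det_one_submatrix_orderEmbOfFin_eq_sign {f : Fin m → Fin n} {L : Idx n m}
    (h : Finset.univ.image f = L.1) :
    ∃ σ : Equiv.Perm (Fin m),
      ((1 : Matrix (Fin n) (Fin n) R).submatrix f (L.1.orderEmbOfFin L.2)).det = σ.sign := by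
  have hf : ∀ a, f a ∈ L.1 := fun a => h ▸ Finset.mem_image_of_mem f (Finset.mem_univ a)
  set σ : Fin m → Fin m := fun a => (L.1.orderIsoOfFin L.2).symm ⟨f a, hf a⟩
  have hσ : ∀ a, L.1.orderEmbOfFin L.2 (σ a) = f a := fun a => by
    simp [σ, ← Finset.coe_orderIsoOfFin_apply]
  have hsurj : Function.Surjective σ := fun b => by
    have hb : L.1.orderEmbOfFin L.2 b ∈ Finset.univ.image f := by
      rw [h]; exact Finset.orderEmbOfFin_mem L.1 L.2 b
    obtain ⟨a, -, ha⟩ := Finset.mem_image.mp hb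
    exact ⟨a, (L.1.orderEmbOfFin L.2).injective (by rw [hσ, ha])⟩
  set e := Equiv.ofBijective σ hsurj.bijective_of_finite
  refine ⟨e, ?_⟩
  have : (1 : Matrix (Fin n) (Fin n) R).submatrix f (L.1.orderEmbOfFin L.2) =
      (1 : Matrix (Fin m) (Fin m) R).submatrix e id := by
    ext a b
    simp [← hσ, one_apply, e]
  rw [this, det_permute, det_one, mul_one]

theorem det_one_submatrix_orderEmbOfFin (K L : Idx n m) :
    ((1 : Matrix (Fin n) (Fin n) R).submatrix (K.1.orderEmbOfFin K.2)
      (L.1.orderEmbOfFin L.2)).det = (1 : Matrix (Idx n m) (Idx n m) R) K L := by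
  rcases eq_or_ne K L with rfl | hKL
  · rw [one_apply_eq, ← det_one (R := R) (n := Fin m)]
    exact congrArg det (submatrix_one_embedding (K.1.orderEmbOfFin K.2).toEmbedding)
  · rw [one_apply_ne hKL]
    exact det_one_submatrix_orderEmbOfFin_eq_zero
      (by rwa [Finset.image_orderEmbOfFin_univ, Ne, ← Subtype.ext_iff])

theorem extPow_transvection (i j : Fin n) (ζ : R) :
    extPow n m (transvection j i ζ) = 1 + ζ • extPowTransvectionDeriv R i j := by
  ext K L
  set f := K.1.orderEmbOfFin K.2
  set g := L.1.orderEmbOfFin L.2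
  rw [Matrix.add_apply, Matrix.smul_apply, smul_eq_mul, ← det_one_submatrix_orderEmbOfFin, extPow,
    extPowTransvectionDeriv]
  split_ifs with hj
  · obtain ⟨a₀, ha₀⟩ : j ∈ Set.range f := by rwa [Finset.range_orderEmbOfFin]
    set X := (1 : Matrix (Fin n) (Fin n) R).submatrix f g
    have hrow : (transvection j i ζ).submatrix f g =
        X.updateRow a₀ (X a₀ + ζ • fun b => (1 : Matrix (Fin n) (Fin n) R) i (g b)) := by
      ext a b
      rcases eq_or_ne a a₀ with rfl | ha
      · simp [X, transvection, ha₀, single_apply, one_apply]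
      · have : j ≠ f a := ha₀ ▸ f.injective.ne ha.symm
        simp [X, transvection, ha, this]
    have hswap : X.updateRow a₀ (fun b => (1 : Matrix (Fin n) (Fin n) R) i (g b)) =
        (1 : Matrix (Fin n) (Fin n) R).submatrix (Function.update id j i ∘ f) g := by
      ext a b
      rcases eq_or_ne a a₀ with rfl | ha
      · rw [updateRow_self, submatrix_apply, Function.comp_apply, ha₀, Function.update_self]
      · have : f a ≠ j := ha₀ ▸ f.injective.ne ha
        rw [updateRow_ne ha, submatrix_apply, Function.comp_apply, Function.update_of_ne this]
        rfl
    rw [hrow, det_updateRow_add, updateRow_eq_self, det_updateRow_smul, hswap]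
  · have hj' : ∀ a, f a ≠ j := fun a h => hj (h ▸ Finset.orderEmbOfFin_mem K.1 K.2 a)
    have : (transvection j i ζ).submatrix f g = (1 : Matrix (Fin n) (Fin n) R).submatrix f g := by
      ext a b
      simp [transvection, (hj' a).symm]
    rw [this, mul_zero, add_zero]

theorem extPowTransvectionDeriv_apply_of_notMem (i : Fin n) {j : Fin n} {K : Idx n m}
    (hj : j ∉ K.1) (L : Idx n m) : extPowTransvectionDeriv R i j K L = 0 :=
  if_neg hj

theorem extPowTransvectionDeriv_apply_of_ne {i j : Fin n} {K L : Idx n m}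
    (h : insert i (K.1.erase j) ≠ L.1) : extPowTransvectionDeriv R i j K L = 0 := by
  by_cases hj : j ∈ K.1
  · rw [extPowTransvectionDeriv, if_pos hj]
    refine det_one_submatrix_orderEmbOfFin_eq_zero ?_
    rwa [← Finset.image_image, Finset.image_orderEmbOfFin_univ, Finset.image_update_id i hj]
  · exact extPowTransvectionDeriv_apply_of_notMem i hj L

theorem extPowTransvectionDeriv_apply_eq_sign {i j : Fin n} {K L : Idx n m} (hj : j ∈ K.1)
    (h : insert i (K.1.erase j) = L.1) :
    ∃ σ : Equiv.Perm (Fin m), extPowTransvectionDeriv R i j K L = σ.sign := by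
  rw [extPowTransvectionDeriv, if_pos hj]
  refine det_one_submatrix_orderEmbOfFin_eq_sign ?_
  rwa [← Finset.image_image, Finset.image_orderEmbOfFin_univ, Finset.image_update_id i hj]

theorem single_mul_extPowTransvectionDeriv (i : Fin n) {j : Fin n} (I : Idx n m) {J : Idx n m}
    (hjJ : j ∉ J.1) (c : R) : single I J c * extPowTransvectionDeriv R i j = 0 := by
  ext K L
  rcases eq_or_ne K I with rfl | hK
  · simp [extPowTransvectionDeriv_apply_of_notMem i hjJ]
  · simp [hK]

theorem extPowTransvectionDeriv_mul_self {i j : Fin n} (hij : i ≠ j) :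
    extPowTransvectionDeriv R i j * extPowTransvectionDeriv R i j =
      (0 : Matrix (Idx n m) (Idx n m) R) := by
  ext K L
  rw [mul_apply, Matrix.zero_apply]
  refine Finset.sum_eq_zero fun M _ => ?_
  by_cases hM : insert i (K.1.erase j) = M.1
  · have : j ∉ M.1 := by simp [← hM, Ne.symm hij]
    rw [extPowTransvectionDeriv_apply_of_notMem i this, mul_zero]
  · rw [extPowTransvectionDeriv_apply_of_ne hM, zero_mul]

theorem extPowTransvectionDeriv_mul_single {i j : Fin n} {I Ĩ : Idx n m}
    (hĨ : Ĩ.1 = insert j (I.1.erase i)) (J : Idx n m) (c : R) :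
    extPowTransvectionDeriv R i j * single I J c =
      single Ĩ J (extPowTransvectionDeriv R i j Ĩ I * c) := by
  ext K L
  rcases eq_or_ne L J with rfl | hL
  · rw [mul_single_apply_same]
    rcases eq_or_ne K Ĩ with rfl | hK
    · simp
    · rw [single_apply_of_row_ne (Ne.symm hK)]
      by_cases hj : j ∈ K.1
      · refine mul_eq_zero_of_left (extPowTransvectionDeriv_apply_of_ne fun h => hK ?_) c
        rw [Subtype.ext_iff, hĨ]
        exact Finset.eq_insert_erase_of_insert_erase_eq hj (by rw [K.2, I.2]) h
      · rw [extPowTransvectionDeriv_apply_of_notMem i hj, zero_mul]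
  · rw [mul_single_apply_of_ne (hbj := hL), single_apply_of_col_ne _ _ (Ne.symm hL)]

end

theorem one_add_mul_one_add_mul_one_sub_mul_one_sub {A : Type*} [Ring A] {a b : A}
    (hab : a * b = 0) (ha : a * a = 0) (hb : b * b = 0) :
    (1 + a) * (1 + b) * (1 - a) * (1 - b) = 1 - b * a :=
  calc (1 + a) * (1 + b) * (1 - a) * (1 - b)
      = (1 + a + b + a * b) * (1 - a - b + a * b) := by noncomm_ring
    _ = (1 + a + b) * (1 - a - b) := by rw [hab, add_zero, add_zero]
    _ = 1 - b * a - (a * a + a * b + b * b) := by noncomm_ring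
    _ = 1 - b * a := by rw [hab, ha, hb]; abel

/-- Second type of commutation: if `i ∈ I`, `j ∉ I`, `i ∉ J`, `j ∉ J`, then the commutator
`[t_{I,J}(ξ), ∧^m t_{j,i}(ζ)] = t_{Ĩ,J}(±ζξ)` where `Ĩ = (I\{i}) ∪ {j}`, the sign `ε`
depending only on `I`, `i`, `j` (not on `ξ`, `ζ`).  The inverses
`t_{I,J}(ξ)⁻¹ = t_{I,J}(-ξ)` and `(∧^m t_{j,i}(ζ))⁻¹ = ∧^m t_{j,i}(-ζ)` are written out. -/
theorem commutator_second_type {R : Type*} [CommRing R] {n m : ℕ}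
    (I J : Idx n m) (hIJ : I ≠ J) (i j : Fin n) (hij : i ≠ j)
    (hiI : i ∈ I.1) (hjI : j ∉ I.1) (hjJ : j ∉ J.1) :
    ∃ ε : R, (ε = 1 ∨ ε = -1) ∧ ∀ ξ ζ : R,
      Matrix.transvection I J ξ * extPow n m (Matrix.transvection j i ζ) *
          Matrix.transvection I J (-ξ) * extPow n m (Matrix.transvection j i (-ζ)) =
        Matrix.transvection
          (⟨insert j (I.1.erase i), by
            rw [Finset.card_insert_of_notMem (fun h => hjI (Finset.mem_of_mem_erase h)),
              Finset.card_erase_of_mem hiI, I.2]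
            have : 0 < I.1.card := Finset.card_pos.mpr ⟨i, hiI⟩
            omega⟩ : Idx n m) J (ε * (ζ * ξ)) := by
  set Ĩ : Idx n m := ⟨insert j (I.1.erase i), _⟩
  set N : Matrix (Idx n m) (Idx n m) R := extPowTransvectionDeriv R i j with hN
  obtain ⟨σ, hσ⟩ : ∃ σ : Equiv.Perm (Fin m), N Ĩ I = σ.sign :=
    extPowTransvectionDeriv_apply_eq_sign (Finset.mem_insert_self j _) <| by
      rw [Finset.erase_insert fun h => hjI (Finset.mem_of_mem_erase h), Finset.insert_erase hiI]
  refine ⟨-N Ĩ I, ?_, fun ξ ζ => ?_⟩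
  · rcases Int.units_eq_one_or σ.sign with h | h <;> simp [hσ, h]
  have hEN : single I J ξ * (ζ • N) = 0 := by
    rw [mul_smul_comm, single_mul_extPowTransvectionDeriv i I hjJ, smul_zero]
  have hEE : single I J ξ * single I J ξ = 0 := single_mul_single_of_ne _ _ _ _ (Ne.symm hIJ) _
  have hNN : (ζ • N) * (ζ • N) = 0 := by
    rw [smul_mul_smul_comm, extPowTransvectionDeriv_mul_self hij, smul_zero]
  have hcomm : (1 + single I J ξ) * (1 + ζ • N) * (1 - single I J ξ) * (1 - ζ • N) =
      1 - ζ • single Ĩ J (N Ĩ I * ξ) := by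
    rw [one_add_mul_one_add_mul_one_sub_mul_one_sub hEN hEE hNN, smul_mul_assoc,
      extPowTransvectionDeriv_mul_single (Ĩ := Ĩ) rfl]
  rw [extPow_transvection, extPow_transvection, ← hN, transvection, transvection, transvection,
    ← single_neg, neg_smul, ← sub_eq_add_neg, ← sub_eq_add_neg, hcomm, smul_single,
    sub_eq_add_neg, single_neg]
  congr 2
  simp only [smul_eq_mul]
  ring
end

section
/- For a commutative ring R with N ≥ 3 and an ideal A of R, the relative elementary group E(N,R,A), defined as the normal closure of E(N,A) in E(N,R), is generated by the elements z_{I,J}(ξ,ζ) = t_{J,I}(ζ) t_{I,J}(ξ) t_{J,I}(−ζ) for distinct indices I, J, ξ ∈ A, ζ ∈ R. -/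
open Matrix

/-- The elementary transvection `t_{I,J}(ξ) = e + ξ e_{I,J}` as an element of `GL ι R`. -/
def tGL {R : Type*} [CommRing R] {ι : Type*} [Fintype ι] [DecidableEq ι] {I J : ι}
    (h : I ≠ J) (ξ : R) : GL ι R where
  val := Matrix.transvection I J ξ
  inv := Matrix.transvection I J (-ξ)
  val_inv := by
    rw [Matrix.transvection_mul_transvection_same _ _ h, add_neg_cancel]
    simp [Matrix.transvection]
  inv_val := by
    rw [Matrix.transvection_mul_transvection_same _ _ h, neg_add_cancel]
    simp [Matrix.transvection]

/-- `E(N, A)`: the subgroup generated by all elementary transvections of level `A`. -/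
def elemSub (R : Type*) [CommRing R] (ι : Type*) [Fintype ι] [DecidableEq ι]
    (A : Ideal R) : Subgroup (GL ι R) :=
  Subgroup.closure {g | ∃ (I J : ι) (h : I ≠ J) (ξ : R), ξ ∈ A ∧ g = tGL h ξ}

/-- `E(N, R)`: the (absolute) elementary subgroup. -/
def elemSubFull (R : Type*) [CommRing R] (ι : Type*) [Fintype ι] [DecidableEq ι] :
    Subgroup (GL ι R) :=
  Subgroup.closure {g | ∃ (I J : ι) (h : I ≠ J) (ξ : R), g = tGL h ξ}

/-- The smallest subgroup containing `S` and normalized by `F`: the closure `S^F`. -/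
def closUnder {G : Type*} [Group G] (S F : Subgroup G) : Subgroup G :=
  Subgroup.closure {g | ∃ x ∈ S, ∃ f ∈ F, g = f * x * f⁻¹}

/-- `E(N, R, A)`: the relative elementary subgroup, the normal closure of `E(N,A)`
in `E(N,R)`. -/
def relElemSub (R : Type*) [CommRing R] (ι : Type*) [Fintype ι] [DecidableEq ι]
    (A : Ideal R) : Subgroup (GL ι R) :=
  closUnder (elemSub R ι A) (elemSubFull R ι)

/-- `∧^m E(n,R)`: the image of the elementary group `E(n,R)` under the Cauchy–Binet
homomorphism, as a subgroup of `GL_{binom(n,m)}(R)`. -/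
def wedgeElem (R : Type*) [CommRing R] (n m : ℕ) : Subgroup (GL (Idx n m) R) :=
  Subgroup.closure
    {g | ∃ (i j : Fin n) (_ : i ≠ j) (ξ : R),
      (g : Matrix (Idx n m) (Idx n m) R) = extPow n m (Matrix.transvection i j ξ)}

/-!
Let `Z` be the subgroup generated by the `z_{ij}(ξ, ζ)`. It contains `E(N, A)` (take `ζ = 0`)
and lies in `E(N, R, A)`, so everything comes down to `Z` being normalized by each `t_{kl}(a)`.
By the Steinberg relations, conjugating a level-`A` transvection by one transvection lands in `Z`,
and for `(k, l) ≠ (i, j)` the conjugate of `z_{ij}(ξ, ζ) = t_{ji}(ζ) t_{ij}(ξ) t_{ji}(ζ)⁻¹`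
by `t_{kl}(a)` is the conjugate by `t_{ji}(ζ)` of an element of `E(N, A)`. For `(k, l) = (i, j)`
pick a third index `h` and write `t_{ij}(ξ) = [t_{ih}(ξ), t_{hj}(1)]`: the conjugate becomes a
commutator `[u, v] = u (v u v⁻¹)⁻¹` with `u ∈ E(N, A)` a product of transvections into column `h`
and `v = t_{hi}(c) t_{hj}(d)`. Since `t_{hi}` and `t_{hj}` commute, `v` can be peeled off each
factor of `u` in the order that first yields an element of `E(N, A)`, and the last conjugation
then lands in `Z`.
-/

open scoped commutatorElement

section Steinberg

variable {R : Type*} [CommRing R] {ι : Type*} [Fintype ι] [DecidableEq ι] {i j k l : ι}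

lemma tGL_val (h : i ≠ j) (a : R) : (tGL h a : Matrix ι ι R) = 1 + single i j a := rfl

lemma tGL_mul_tGL (h : i ≠ j) (a b : R) : tGL h a * tGL h b = tGL h (a + b) :=
  Units.ext (transvection_mul_transvection_same _ _ h a b)

lemma tGL_inv (h : i ≠ j) (a : R) : (tGL h a)⁻¹ = tGL h (-a) := Units.ext rfl

lemma tGL_zero (h : i ≠ j) : tGL h (0 : R) = 1 := by
  ext : 1; simp [tGL_val]

lemma commute_tGL (hkl : k ≠ l) (hij : i ≠ j) (hli : l ≠ i) (hkj : k ≠ j) (a b : R) :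
    Commute (tGL hkl a) (tGL hij b) := by
  refine Units.ext ?_
  simp only [Units.val_mul, tGL_val, add_mul, mul_add, one_mul, mul_one,
    single_mul_single_of_ne _ _ _ _ hli, single_mul_single_of_ne _ _ _ _ hkj.symm]
  abel

lemma conj_tGL_of_ne (hkl : k ≠ l) (hij : i ≠ j) (hli : l ≠ i) (hkj : k ≠ j) (a b : R) :
    MulAut.conj (tGL hkl a) (tGL hij b) = tGL hij b := by
  simp [(commute_tGL hkl hij hli hkj a b).eq]

lemma conj_tGL_chain_left (hki : k ≠ i) (hij : i ≠ j) (hkj : k ≠ j) (a b : R) :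
    MulAut.conj (tGL hki a) (tGL hij b) = tGL hkj (a * b) * tGL hij b := by
  rw [MulAut.conj_apply, tGL_inv]
  refine Units.ext ?_
  simp only [Units.val_mul, tGL_val, add_mul, mul_add, one_mul, mul_one, single_mul_single_same,
    single_mul_single_of_ne _ _ _ _ hij.symm, single_mul_single_of_ne _ _ _ _ hkj.symm,
    single_mul_single_of_ne _ _ _ _ hki.symm, add_zero, ← Matrix.single_neg, mul_neg]
  abel

lemma conj_tGL_chain_right (hij : i ≠ j) (hjl : j ≠ l) (hil : i ≠ l) (a b : R) :
    MulAut.conj (tGL hjl a) (tGL hij b) = tGL hij b * tGL hil (-(b * a)) := by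
  rw [MulAut.conj_apply, tGL_inv]
  refine Units.ext ?_
  simp only [Units.val_mul, tGL_val, add_mul, mul_add, one_mul, mul_one, single_mul_single_same,
    single_mul_single_of_ne _ _ _ _ hij.symm, single_mul_single_of_ne _ _ _ _ hjl.symm,
    single_mul_single_of_ne _ _ _ _ hil.symm, add_zero, ← Matrix.single_neg, mul_neg]
  abel

lemma tGL_commutator (hik : i ≠ k) (hkj : k ≠ j) (hij : i ≠ j) (a b : R) :
    ⁅tGL hik a, tGL hkj b⁆ = tGL hij (a * b) := by
  rw [commutatorElement_def, ← MulAut.conj_apply, conj_tGL_chain_left hik hkj hij,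
    mul_inv_cancel_right]

end Steinberg

lemma MulAut.conj_conj {G : Type*} [Group G] (x w t : G) :
    MulAut.conj x (MulAut.conj w t) = MulAut.conj (MulAut.conj x w) (MulAut.conj x t) := by
  simp only [MulAut.conj_apply]; group

theorem Subgroup.closure_le_normalizer_closure {G : Type*} [Group G] {s t : Set G}
    (ht : ∀ g ∈ t, g⁻¹ ∈ t) (hst : ∀ g ∈ t, ∀ x ∈ s, MulAut.conj g x ∈ closure s) :
    closure t ≤ normalizer (closure s : Set G) := by
  have hconj : ∀ g ∈ t, ∀ y ∈ closure s, MulAut.conj g y ∈ closure s := fun g hg y hy =>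
    (closure_le ((closure s).comap (MulAut.conj g).toMonoidHom)).2 (hst g hg) hy
  refine (closure_le _).2 fun g hg => mem_normalizer_iff.2 fun y => ⟨hconj g hg y, fun hy => ?_⟩
  simpa [mul_assoc] using hconj g⁻¹ (ht g hg) _ hy

lemma Fintype.exists_ne_ne {ι : Type*} [Fintype ι] [DecidableEq ι] (hcard : 3 ≤ Fintype.card ι)
    (i j : ι) : ∃ k, i ≠ k ∧ j ≠ k := by
  have hlt : ({i, j} : Finset ι).card < (Finset.univ : Finset ι).card := by
    rw [Finset.card_univ]; have := Finset.card_le_two (a := i) (b := j); omega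
  obtain ⟨k, -, hk⟩ := Finset.exists_mem_notMem_of_card_lt_card hlt
  simp only [Finset.mem_insert, Finset.mem_singleton, not_or] at hk
  exact ⟨k, Ne.symm hk.1, Ne.symm hk.2⟩

section Relative

variable {R : Type*} [CommRing R] {ι : Type*} [Fintype ι] [DecidableEq ι] {A : Ideal R}
  {i j k l : ι}

def zGL (hij : i ≠ j) (ξ ζ : R) : GL ι R := tGL hij.symm ζ * tGL hij ξ * tGL hij.symm (-ζ)

lemma zGL_eq_conj (hij : i ≠ j) (ξ ζ : R) :
    zGL hij ξ ζ = MulAut.conj (tGL hij.symm ζ) (tGL hij ξ) := by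
  rw [MulAut.conj_apply, tGL_inv]; rfl

variable (R ι A) in
def zSubgroup : Subgroup (GL ι R) :=
  Subgroup.closure {g | ∃ (i j : ι) (hij : i ≠ j) (ξ : R), ξ ∈ A ∧ ∃ ζ : R, g = zGL hij ξ ζ}

lemma zGL_mem_zSubgroup (hij : i ≠ j) {ξ : R} (hξ : ξ ∈ A) (ζ : R) :
    zGL hij ξ ζ ∈ zSubgroup R ι A :=
  Subgroup.subset_closure ⟨i, j, hij, ξ, hξ, ζ, rfl⟩

lemma tGL_mem_zSubgroup (hij : i ≠ j) {ξ : R} (hξ : ξ ∈ A) : tGL hij ξ ∈ zSubgroup R ι A := by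
  simpa [zGL, tGL_zero] using zGL_mem_zSubgroup hij hξ 0

lemma tGL_mem_elemSub (hij : i ≠ j) {ξ : R} (hξ : ξ ∈ A) : tGL hij ξ ∈ elemSub R ι A :=
  Subgroup.subset_closure ⟨i, j, hij, ξ, hξ, rfl⟩

lemma elemSub_le_zSubgroup : elemSub R ι A ≤ zSubgroup R ι A :=
  (Subgroup.closure_le _).2 fun _ ⟨_, _, hij, _, hξ, hg⟩ => hg ▸ tGL_mem_zSubgroup hij hξ

lemma conj_tGL_mem_elemSub (hkl : k ≠ l) (hij : i ≠ j) (hne : ¬(k = j ∧ l = i)) (a : R)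
    {β : R} (hβ : β ∈ A) : MulAut.conj (tGL hkl a) (tGL hij β) ∈ elemSub R ι A := by
  by_cases hli : l = i
  · subst hli
    rw [conj_tGL_chain_left hkl hij fun hkj => hne ⟨hkj, rfl⟩]
    exact mul_mem (tGL_mem_elemSub _ (A.mul_mem_left a hβ)) (tGL_mem_elemSub _ hβ)
  by_cases hkj : k = j
  · subst hkj
    rw [conj_tGL_chain_right hij hkl (Ne.symm hli)]
    exact mul_mem (tGL_mem_elemSub _ hβ) (tGL_mem_elemSub _ (neg_mem (A.mul_mem_right a hβ)))
  rw [conj_tGL_of_ne hkl hij hli hkj]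
  exact tGL_mem_elemSub _ hβ

lemma conj_tGL_mem_zSubgroup_of_mem_elemSub (hkl : k ≠ l) (a : R) {g : GL ι R}
    (hg : g ∈ elemSub R ι A) : MulAut.conj (tGL hkl a) g ∈ zSubgroup R ι A := by
  suffices elemSub R ι A ≤ (zSubgroup R ι A).comap (MulAut.conj (tGL hkl a)).toMonoidHom from
    this hg
  refine (Subgroup.closure_le _).2 ?_
  rintro _ ⟨i, j, hij, β, hβ, rfl⟩
  by_cases hji : k = j ∧ l = i
  · obtain ⟨rfl, rfl⟩ := hji
    have hz := zGL_mem_zSubgroup hij hβ a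
    rwa [zGL_eq_conj] at hz
  · exact elemSub_le_zSubgroup (conj_tGL_mem_elemSub hkl hij hji a hβ)

lemma conj_tGL_zGL_mem_of_ne (hkl : k ≠ l) (hij : i ≠ j) (hne : ¬(k = i ∧ l = j)) (a : R)
    {ξ : R} (hξ : ξ ∈ A) (ζ : R) : MulAut.conj (tGL hkl a) (zGL hij ξ ζ) ∈ zSubgroup R ι A := by
  by_cases hji : k = j ∧ l = i
  · obtain ⟨rfl, rfl⟩ := hji
    rw [zGL_eq_conj, ← MulAut.mul_apply, ← map_mul, tGL_mul_tGL, ← zGL_eq_conj]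
    exact zGL_mem_zSubgroup hij hξ _
  suffices ∃ g ∈ elemSub R ι A,
      MulAut.conj (tGL hkl a) (zGL hij ξ ζ) = MulAut.conj (tGL hij.symm ζ) g by
    obtain ⟨g, hg, hconj⟩ := this
    exact hconj ▸ conj_tGL_mem_zSubgroup_of_mem_elemSub hij.symm ζ hg
  rw [zGL_eq_conj, MulAut.conj_conj]
  by_cases hki : k = i
  · subst hki
    have hlj : l ≠ j := fun hlj => hne ⟨rfl, hlj⟩
    rw [conj_tGL_chain_right hij.symm hkl hlj.symm, conj_tGL_of_ne hkl hij hkl.symm hij,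
      map_mul, MulAut.mul_apply]
    exact ⟨_, conj_tGL_mem_elemSub _ hij (by simp [hkl.symm]) _ hξ, rfl⟩
  by_cases hlj : l = j
  · subst hlj
    rw [conj_tGL_chain_left hkl hij.symm hki, conj_tGL_of_ne hkl hij hij.symm hkl,
      (commute_tGL hki hij.symm hij hki _ _).eq, map_mul, MulAut.mul_apply]
    exact ⟨_, conj_tGL_mem_elemSub hki hij (by simp [hkl]) _ hξ, rfl⟩
  rw [conj_tGL_of_ne hkl hij.symm hlj hki]
  exact ⟨_, conj_tGL_mem_elemSub hkl hij hji _ hξ, rfl⟩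

lemma conj_mul_tGL_mem_zSubgroup (hik : i ≠ k) (hjk : j ≠ k) (hij : i ≠ j) (c d : R) {β : R}
    (hβ : β ∈ A) :
    MulAut.conj (tGL hik.symm c * tGL hjk.symm d) (tGL hik β) ∈ zSubgroup R ι A := by
  rw [map_mul, MulAut.mul_apply]
  exact conj_tGL_mem_zSubgroup_of_mem_elemSub _ _
    (conj_tGL_mem_elemSub _ hik (fun h => hij h.2.symm) _ hβ)

lemma conj_tGL_self_zGL_mem (hij : i ≠ j) (hik : i ≠ k) (hjk : j ≠ k) (a : R) {ξ : R}
    (hξ : ξ ∈ A) (ζ : R) : MulAut.conj (tGL hij a) (zGL hij ξ ζ) ∈ zSubgroup R ι A := by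
  set u := tGL hik (a * (ζ * ξ)) * tGL hjk (ζ * ξ) * tGL hik ξ
  set v := tGL hik.symm (-ζ) * tGL hjk.symm (1 + ζ * a) with hv_def
  have hu : MulAut.conj (tGL hij a * tGL hij.symm ζ) (tGL hik ξ) = u := by
    rw [map_mul, MulAut.mul_apply, conj_tGL_chain_left hij.symm hik hjk, map_mul,
      conj_tGL_chain_left hij hjk hik, conj_tGL_of_ne hij hik hij.symm hik]
  have hv : MulAut.conj (tGL hij a * tGL hij.symm ζ) (tGL hjk.symm 1) = v := by
    rw [map_mul, MulAut.mul_apply, conj_tGL_chain_right hjk.symm hij.symm hik.symm, map_mul,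
      conj_tGL_of_ne hij hjk.symm hjk hij, conj_tGL_chain_right hik.symm hij hjk.symm,
      ← mul_assoc, (commute_tGL hjk.symm hik.symm hjk hik.symm _ _).eq, mul_assoc, tGL_mul_tGL,
      one_mul, neg_mul, neg_neg]
  have hu_mem : u ∈ zSubgroup R ι A :=
    mul_mem (mul_mem (tGL_mem_zSubgroup _ (A.mul_mem_left _ (A.mul_mem_left _ hξ)))
      (tGL_mem_zSubgroup _ (A.mul_mem_left _ hξ))) (tGL_mem_zSubgroup _ hξ)
  have hvu_mem : MulAut.conj v u ∈ zSubgroup R ι A := by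
    have hi : ∀ β ∈ A, MulAut.conj v (tGL hik β) ∈ zSubgroup R ι A := fun β hβ =>
      conj_mul_tGL_mem_zSubgroup hik hjk hij _ _ hβ
    have hj : ∀ β ∈ A, MulAut.conj v (tGL hjk β) ∈ zSubgroup R ι A := fun β hβ => by
      rw [hv_def, (commute_tGL hik.symm hjk.symm hik hjk.symm _ _).eq]
      exact conj_mul_tGL_mem_zSubgroup hjk hik hij.symm _ _ hβ
    simp only [u, map_mul]
    exact mul_mem (mul_mem (hi _ (A.mul_mem_left _ (A.mul_mem_left _ hξ)))
      (hj _ (A.mul_mem_left _ hξ))) (hi _ hξ)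
  have hcomm : tGL hij ξ = ⁅tGL hik ξ, tGL hjk.symm 1⁆ := by
    rw [tGL_commutator hik hjk.symm hij, mul_one]
  rw [zGL_eq_conj, ← MulAut.mul_apply, ← map_mul, hcomm, map_commutatorElement, hu, hv,
    commutatorElement_def]
  have hsplit : u * v * u⁻¹ * v⁻¹ = u * (MulAut.conj v u)⁻¹ := by
    simp only [MulAut.conj_apply]; group
  rw [hsplit]
  exact mul_mem hu_mem (inv_mem hvu_mem)

lemma conj_tGL_zGL_mem (hcard : 3 ≤ Fintype.card ι) (hkl : k ≠ l) (hij : i ≠ j) (a : R)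
    {ξ : R} (hξ : ξ ∈ A) (ζ : R) : MulAut.conj (tGL hkl a) (zGL hij ξ ζ) ∈ zSubgroup R ι A := by
  by_cases hsame : k = i ∧ l = j
  · obtain ⟨rfl, rfl⟩ := hsame
    obtain ⟨m, hkm, hlm⟩ := Fintype.exists_ne_ne hcard k l
    exact conj_tGL_self_zGL_mem hij hkm hlm a hξ ζ
  · exact conj_tGL_zGL_mem_of_ne hkl hij hsame a hξ ζ

lemma elemSubFull_le_normalizer_zSubgroup (hcard : 3 ≤ Fintype.card ι) :
    elemSubFull R ι ≤ Subgroup.normalizer (zSubgroup R ι A : Set (GL ι R)) := by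
  refine Subgroup.closure_le_normalizer_closure ?_ ?_
  · rintro _ ⟨i, j, hij, a, rfl⟩
    exact ⟨i, j, hij, -a, tGL_inv hij a⟩
  · rintro _ ⟨k, l, hkl, a, rfl⟩ _ ⟨i, j, hij, ξ, hξ, ζ, rfl⟩
    exact conj_tGL_zGL_mem hcard hkl hij a hξ ζ

lemma relElemSub_le_zSubgroup (hcard : 3 ≤ Fintype.card ι) :
    relElemSub R ι A ≤ zSubgroup R ι A := by
  refine (Subgroup.closure_le _).2 ?_
  rintro _ ⟨x, hx, f, hf, rfl⟩
  exact (Subgroup.mem_normalizer_iff.1 (elemSubFull_le_normalizer_zSubgroup hcard hf) x).1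
    (elemSub_le_zSubgroup hx)

lemma zSubgroup_le_relElemSub : zSubgroup R ι A ≤ relElemSub R ι A := by
  refine (Subgroup.closure_le _).2 ?_
  rintro _ ⟨i, j, hij, ξ, hξ, ζ, rfl⟩
  refine Subgroup.subset_closure ⟨tGL hij ξ, tGL_mem_elemSub hij hξ, tGL hij.symm ζ,
    Subgroup.subset_closure ⟨j, i, hij.symm, ζ, rfl⟩, ?_⟩
  rw [tGL_inv]; rfl

end Relative

/-- Vaserstein–Suslin: for `N ≥ 3`, the relative elementary group `E(N,R,A)` is generated
by the elements `z_{I,J}(ξ,ζ) = t_{J,I}(ζ) t_{I,J}(ξ) t_{J,I}(−ζ)`, `ξ ∈ A`, `ζ ∈ R`. -/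
theorem vaserstein_suslin {R : Type*} [CommRing R] {N : ℕ} (hN : 3 ≤ N) (A : Ideal R) :
    relElemSub R (Fin N) A =
      Subgroup.closure {g : GL (Fin N) R |
        ∃ (I J : Fin N) (h : I ≠ J) (ξ : R), ξ ∈ A ∧ ∃ ζ : R,
          g = tGL h.symm ζ * tGL h ξ * tGL h.symm (-ζ)} :=
  le_antisymm (relElemSub_le_zSubgroup (by simpa using hN)) zSubgroup_le_relElemSub
end
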